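/- arXiv:1812.11511 — 2 statements merged into one kernel-verified Lean document; each statement's English description precedes it below -/
import Mathlib

section
/- Let A be a residuated lattice and F a filter of A. A subset P of A is an F-minimal prime filter if and only if its complement A \ P is a ∨-closed subset of A that is maximal (with respect to inclusion) among ∨-closed subsets of A disjoint from F. -/
class ResiduatedLattice (α : Type*) extends Lattice α, CommMonoid α, BoundedOrder α where
  rimp : α → α → α
  one_eq_top : (1 : α) = ⊤
  adjunction : ∀ x y z : α, x * y ≤ z ↔ x ≤ rimp y z

variable {α : Type*} [ResiduatedLattice α]

/-- A filter of a residuated lattice: nonempty, closed under `⊙` and upward closed. -/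
def IsFilter (F : Set α) : Prop :=
  F.Nonempty ∧ (∀ x ∈ F, ∀ y ∈ F, x * y ∈ F) ∧ ∀ x ∈ F, ∀ y : α, x ≤ y → y ∈ F

/-- A prime filter: a proper filter such that `x ⊔ y ∈ P` implies `x ∈ P` or `y ∈ P`. -/
def IsPrimeFilter (P : Set α) : Prop :=
  IsFilter P ∧ P ≠ Set.univ ∧ ∀ x y : α, x ⊔ y ∈ P → x ∈ P ∨ y ∈ P

/-- A `∨`-closed subset: nonempty and closed under join. -/
def IsJoinClosed (C : Set α) : Prop :=
  C.Nonempty ∧ ∀ x ∈ C, ∀ y ∈ C, x ⊔ y ∈ C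

/-- The filter generated by a set. -/
def filterGen (X : Set α) : Set α := ⋂₀ {G : Set α | IsFilter G ∧ X ⊆ G}

/-- An `X`-minimal prime filter: prime, contains `X`, minimal among primes containing `X`. -/
def IsMinPrimeOver (X P : Set α) : Prop :=
  IsPrimeFilter P ∧ X ⊆ P ∧ ∀ Q : Set α, IsPrimeFilter Q → X ⊆ Q → Q ⊆ P → Q = P

/-- `ω_F(X) = {a | x ∨ a ∈ F for some x ∈ X}`. -/
def omegaF (F X : Set α) : Set α := {a : α | ∃ x ∈ X, x ⊔ a ∈ F}

/-- The coannihilator `(F : x) = {a | x ∨ a ∈ F}`. -/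
def coann (F : Set α) (x : α) : Set α := {a : α | x ⊔ a ∈ F}

/-- `D_F(H) = {a | x ∨ a ∈ F for some x ∉ H}`, the set of `F`-divisors of `H`. -/
def divisorsF (F H : Set α) : Set α := {a : α | ∃ x ∉ H, x ⊔ a ∈ F}

/-- A lattice ideal: nonempty, closed under join and downward closed. -/
def IsLatticeIdeal (I : Set α) : Prop :=
  I.Nonempty ∧ (∀ x ∈ I, ∀ y ∈ I, x ⊔ y ∈ I) ∧ ∀ x y : α, x ≤ y → y ∈ I → x ∈ I

/-- The lattice ideal generated by a set. -/
def idealGen (X : Set α) : Set α := ⋂₀ {I : Set α | IsLatticeIdeal I ∧ X ⊆ I}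

/-- An `ω_F`-filter: a filter of the form `ω_F(I)` for some lattice ideal `I`. -/
def IsOmegaFilter (F H : Set α) : Prop :=
  IsFilter H ∧ ∃ I : Set α, IsLatticeIdeal I ∧ H = omegaF F I

/-! The proof passes to complements: `Q ↦ Qᶜ` reverses inclusion and sends prime filters
containing `F` to `∨`-closed sets disjoint from `F`. Conversely the complement of a maximal
`∨`-closed set `C` disjoint from `F` is a prime filter: maximality says that every `x ∉ C`
has a witness `c ∈ C` with `c ∨ x ∈ F`, and since `⊙` distributes over `∨` and is below both
factors, `(c ∨ x) ⊙ (d ∨ y) ≤ c ∨ d ∨ x ⊙ y` keeps `Cᶜ` closed under `⊙`. Zorn's lemma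
supplies enough maximal sets for minimality to transfer. -/

namespace ResiduatedLattice

theorem gc_mul_rimp (y : α) : GaloisConnection (· * y) (rimp y) :=
  fun x z => adjunction x y z

protected theorem mul_le_right (x y : α) : x * y ≤ y := by
  simpa using (gc_mul_rimp y).monotone_l (one_eq_top (α := α) ▸ le_top : x ≤ 1)

protected theorem mul_le_left (x y : α) : x * y ≤ x :=
  mul_comm y x ▸ ResiduatedLattice.mul_le_right y x

protected theorem sup_mul (x y z : α) : (x ⊔ y) * z = x * z ⊔ y * z :=
  (gc_mul_rimp z).l_sup

theorem sup_mul_sup_le (c d x y : α) : (c ⊔ x) * (d ⊔ y) ≤ c ⊔ d ⊔ x * y :=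
  calc (c ⊔ x) * (d ⊔ y) = c * (d ⊔ y) ⊔ (d * x ⊔ x * y) := by
        rw [ResiduatedLattice.sup_mul, mul_comm x, ResiduatedLattice.sup_mul, mul_comm y]
    _ ≤ c ⊔ (d ⊔ x * y) :=
        sup_le_sup (ResiduatedLattice.mul_le_left _ _)
          (sup_le_sup_right (ResiduatedLattice.mul_le_left _ _) _)
    _ = c ⊔ d ⊔ x * y := (sup_assoc _ _ _).symm

end ResiduatedLattice

open ResiduatedLattice

theorem IsFilter.isUpperSet {F : Set α} (hF : IsFilter F) : IsUpperSet F :=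
  fun x y hxy hx => hF.2.2 x hx y hxy

theorem IsPrimeFilter.isJoinClosed_compl {P : Set α} (hP : IsPrimeFilter P) :
    IsJoinClosed Pᶜ :=
  ⟨Set.nonempty_compl.mpr hP.2.1, fun x hx y hy hxy => (hP.2.2 x y hxy).elim hx hy⟩

def IsJoinClosedDisjoint (F C : Set α) : Prop :=
  IsJoinClosed C ∧ Disjoint C F

theorem IsPrimeFilter.isJoinClosedDisjoint_compl {F P : Set α} (hP : IsPrimeFilter P)
    (hFP : F ⊆ P) : IsJoinClosedDisjoint F Pᶜ :=
  ⟨hP.isJoinClosed_compl, Set.disjoint_compl_left_iff_subset.mpr hFP⟩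

theorem IsChain.isJoinClosed_sUnion {c : Set (Set α)} (hchain : IsChain (· ⊆ ·) c)
    (hne : c.Nonempty) (hc : ∀ s ∈ c, IsJoinClosed s) : IsJoinClosed (⋃₀ c) := by
  obtain ⟨s, hs⟩ := hne
  obtain ⟨a, ha⟩ := (hc s hs).1
  refine ⟨⟨a, s, hs, ha⟩, ?_⟩
  rintro x ⟨s, hs, hxs⟩ y ⟨t, ht, hyt⟩
  rcases hchain.total hs ht with hst | hts
  · exact ⟨t, ht, (hc t ht).2 x (hst hxs) y hyt⟩
  · exact ⟨s, hs, (hc s hs).2 x hxs y (hts hyt)⟩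

theorem exists_maximal_isJoinClosedDisjoint_superset {F C : Set α}
    (hC : IsJoinClosedDisjoint F C) : ∃ D, C ⊆ D ∧ Maximal (IsJoinClosedDisjoint F) D := by
  refine zorn_subset_nonempty {D | IsJoinClosedDisjoint F D}
    (fun c hcS hchain hne => ⟨⋃₀ c, ⟨?_, ?_⟩, fun s hs => Set.subset_sUnion_of_mem hs⟩) C hC
  · exact hchain.isJoinClosed_sUnion hne fun s hs => (hcS hs).1
  · exact Set.disjoint_sUnion_left.mpr fun s hs => (hcS hs).2

section Maximal

variable {F C : Set α} (hC : Maximal (IsJoinClosedDisjoint F) C)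
include hC

/-- Otherwise `{z | ∃ c ∈ C, z ≤ c ∨ x}` would be a larger `∨`-closed set disjoint from `F`. -/
theorem Maximal.exists_sup_mem_of_notMem (hF : IsUpperSet F) {x : α} (hx : x ∉ C) :
    ∃ c ∈ C, c ⊔ x ∈ F := by
  by_contra! hnone
  set D : Set α := {z | ∃ c ∈ C, z ≤ c ⊔ x}
  obtain ⟨a, ha⟩ := hC.prop.1.1
  have hxD : x ∈ D := ⟨a, ha, le_sup_right⟩
  have hD : IsJoinClosedDisjoint F D := by
    refine ⟨⟨⟨x, hxD⟩, ?_⟩, ?_⟩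
    · rintro p ⟨c, hc, hpc⟩ q ⟨d, hd, hqd⟩
      refine ⟨c ⊔ d, hC.prop.1.2 c hc d hd, sup_le ?_ ?_⟩
      · exact hpc.trans (sup_le_sup_right le_sup_left x)
      · exact hqd.trans (sup_le_sup_right le_sup_right x)
    · exact Set.disjoint_left.mpr fun z ⟨c, hc, hzc⟩ hzF => hnone c hc (hF hzc hzF)
  have hCD : C ⊆ D := fun z hz => ⟨z, hz, le_sup_left⟩
  exact hx (hC.eq_of_superset hD hCD ▸ hxD)

theorem Maximal.isPrimeFilter_compl (hF : IsFilter F) : IsPrimeFilter Cᶜ := by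
  obtain ⟨⟨⟨a, ha⟩, hjoin⟩, hdisj⟩ := hC.prop
  have hFC : F ⊆ Cᶜ := hdisj.subset_compl_left
  have witness : ∀ {x}, x ∉ C → ∃ c ∈ C, c ⊔ x ∈ F :=
    hC.exists_sup_mem_of_notMem hF.isUpperSet
  refine ⟨⟨hF.1.mono hFC, ?_, ?_⟩, fun hu => (hu ▸ Set.mem_univ a : a ∈ Cᶜ) ha, ?_⟩
  · intro x hx y hy hxy
    obtain ⟨c, hc, hcx⟩ := witness hx
    obtain ⟨d, hd, hdy⟩ := witness hy
    exact hFC (hF.isUpperSet (sup_mul_sup_le c d x y) (hF.2.1 _ hcx _ hdy))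
      (hjoin _ (hjoin c hc d hd) _ hxy)
  · intro x hx y hxy hy
    obtain ⟨c, hc, hcx⟩ := witness hx
    exact hFC (hF.isUpperSet (sup_le_sup_left hxy c) hcx) (hjoin c hc y hy)
  · intro x y hxy
    by_contra! hboth
    exact hxy (hjoin x (not_not.mp hboth.1) y (not_not.mp hboth.2))

end Maximal

/-- Theorem 2.6: `P` is an `F`-minimal prime filter iff `Pᶜ` is a `∨`-closed
set maximal among `∨`-closed sets disjoint from `F`. -/
theorem stmt_2 (F P : Set α) (hF : IsFilter F) :
    IsMinPrimeOver F P ↔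
      (IsJoinClosed Pᶜ ∧ Pᶜ ∩ F = ∅ ∧
        ∀ C : Set α, IsJoinClosed C → C ∩ F = ∅ → Pᶜ ⊆ C → C = Pᶜ) := by
  have hrhs : (IsJoinClosed Pᶜ ∧ Pᶜ ∩ F = ∅ ∧
      ∀ C : Set α, IsJoinClosed C → C ∩ F = ∅ → Pᶜ ⊆ C → C = Pᶜ) ↔
      Maximal (IsJoinClosedDisjoint F) Pᶜ := by
    simp only [maximal_subset_iff, IsJoinClosedDisjoint, Set.disjoint_iff_inter_eq_empty,
      and_assoc, and_imp, eq_comm]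
  rw [hrhs]
  constructor
  · rintro ⟨hP, hFP, hmin⟩
    refine ⟨hP.isJoinClosedDisjoint_compl hFP, fun C hC hPC => ?_⟩
    obtain ⟨D, hCD, hD⟩ := exists_maximal_isJoinClosedDisjoint_superset hC
    have hDP : Dᶜ = P := hmin Dᶜ (hD.isPrimeFilter_compl hF) hD.prop.2.subset_compl_left
      (Set.compl_subset_comm.mp (hPC.trans hCD))
    rw [← hDP, compl_compl]
    exact hCD
  · intro hP
    refine ⟨compl_compl P ▸ hP.isPrimeFilter_compl hF, compl_compl P ▸ hP.prop.2.subset_compl_left, fun Q hQ hFQ hQP => ?_⟩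
    exact compl_injective
      (hP.eq_of_superset (hQ.isJoinClosedDisjoint_compl hFQ) (Set.compl_subset_compl.mpr hQP))
end

section
/- Let A be a residuated lattice, F a filter of A, and P a prime filter of A containing F. The following are equivalent: (1) P is an F-minimal prime filter; (2) P = D_F(P); (3) for every x ∈ A, exactly one of 'x ∈ P' and '(F : x) ⊆ P' holds. -/
variable {α : Type*} [ResiduatedLattice α]

/-! An element `a ∈ P \ D_F(P)` is separated from the `∨`-closed set `{x ∨ a | x ∉ P}` by a
prime filter `Q ⊇ F` (Zorn, plus the usual primality argument for a maximal filter avoiding a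
`∨`-closed set); then `Q ⊊ P`, so `P` is not `F`-minimal. Conversely every prime `Q ⊇ F` inside
`P` contains `D_F(P)`, since `x ∨ a ∈ F ⊆ Q` with `x ∉ Q` forces `a ∈ Q`. Finally `a ∈ D_F(P)`
says precisely that `(F : a) ⊄ P`, which turns `P = D_F(P)` into the exclusive disjunction. -/

namespace ResiduatedLattice

instance : IsOrderedMonoid α where
  mul_le_mul_left _ _ h c := (gc_mul_rimp c).monotone_l h

theorem le_one (x : α) : x ≤ 1 := one_eq_top (α := α) ▸ le_top

theorem mul_le_left_s9 (a b : α) : a * b ≤ a := mul_le_of_le_one_right' (le_one b)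

theorem mul_le_right_s9 (a b : α) : a * b ≤ b := mul_le_of_le_one_left' (le_one a)

theorem sup_mul_s9 (a b c : α) : (a ⊔ b) * c = a * c ⊔ b * c := (gc_mul_rimp c).l_sup

theorem mul_sup (a b c : α) : a * (b ⊔ c) = a * b ⊔ a * c := by
  simp only [mul_comm a, sup_mul_s9]

theorem sup_mul_sup_le_s9 (a b c : α) : (a ⊔ b) * (a ⊔ c) ≤ a ⊔ b * c := by
  rw [sup_mul_s9, mul_sup, mul_sup]
  exact sup_le (sup_le ((mul_le_left_s9 a a).trans le_sup_left) ((mul_le_left_s9 a c).trans le_sup_left))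
    (sup_le ((mul_le_right_s9 b a).trans le_sup_left) le_sup_right)

theorem sup_pow_le (a b : α) (n : ℕ) : (a ⊔ b) ^ n ≤ a ⊔ b ^ n := by
  induction n with
  | zero => simp [le_one]
  | succ n ih =>
    calc (a ⊔ b) ^ (n + 1) = (a ⊔ b) ^ n * (a ⊔ b) := pow_succ _ _
      _ ≤ (a ⊔ b ^ n) * (a ⊔ b) := mul_le_mul_left ih _
      _ ≤ a ⊔ b ^ n * b := sup_mul_sup_le_s9 _ _ _
      _ = a ⊔ b ^ (n + 1) := by rw [pow_succ]

end ResiduatedLattice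

open ResiduatedLattice

namespace IsFilter

variable {F : Set α}

theorem one_mem (hF : IsFilter F) : (1 : α) ∈ F :=
  let ⟨x, hx⟩ := hF.1
  hF.2.2 x hx 1 (le_one x)

theorem mul_mem (hF : IsFilter F) {x y : α} (hx : x ∈ F) (hy : y ∈ F) : x * y ∈ F :=
  hF.2.1 x hx y hy

theorem mem_of_le (hF : IsFilter F) {x y : α} (hx : x ∈ F) (hxy : x ≤ y) : y ∈ F :=
  hF.2.2 x hx y hxy

theorem pow_mem (hF : IsFilter F) {x : α} (hx : x ∈ F) (n : ℕ) : x ^ n ∈ F := by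
  induction n with
  | zero => simpa using hF.one_mem
  | succ n ih => rw [pow_succ]; exact hF.mul_mem ih hx

theorem sUnion_of_isChain {c : Set (Set α)} (hc : ∀ G ∈ c, IsFilter G)
    (hchain : IsChain (· ⊆ ·) c) (hne : c.Nonempty) : IsFilter (⋃₀ c) := by
  obtain ⟨G₀, hG₀⟩ := hne
  refine ⟨⟨1, G₀, hG₀, (hc G₀ hG₀).one_mem⟩, ?_, ?_⟩
  · rintro x ⟨G₁, hG₁, hx⟩ y ⟨G₂, hG₂, hy⟩
    rcases hchain.total hG₁ hG₂ with h | h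
    · exact ⟨G₂, hG₂, (hc G₂ hG₂).mul_mem (h hx) hy⟩
    · exact ⟨G₁, hG₁, (hc G₁ hG₁).mul_mem hx (h hy)⟩
  · rintro x ⟨G, hG, hx⟩ y hxy
    exact ⟨G, hG, (hc G hG).mem_of_le hx hxy⟩

end IsFilter

/-- For a filter `F`, the filter generated by `F ∪ {z}`. -/
def adjoinFilter (F : Set α) (z : α) : Set α := {w | ∃ q ∈ F, ∃ n : ℕ, q * z ^ n ≤ w}

theorem isFilter_adjoinFilter {F : Set α} (hF : IsFilter F) (z : α) :
    IsFilter (adjoinFilter F z) := by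
  refine ⟨⟨1, 1, hF.one_mem, 0, by simp⟩, ?_, ?_⟩
  · rintro u ⟨q₁, hq₁, n₁, h₁⟩ v ⟨q₂, hq₂, n₂, h₂⟩
    refine ⟨q₁ * q₂, hF.mul_mem hq₁ hq₂, n₁ + n₂, ?_⟩
    calc q₁ * q₂ * z ^ (n₁ + n₂) = q₁ * z ^ n₁ * (q₂ * z ^ n₂) := by
          rw [pow_add, mul_mul_mul_comm]
      _ ≤ u * v := mul_le_mul' h₁ h₂
  · rintro u ⟨q, hq, n, hn⟩ v huv
    exact ⟨q, hq, n, hn.trans huv⟩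

theorem subset_adjoinFilter (F : Set α) (z : α) : F ⊆ adjoinFilter F z :=
  fun q hq => ⟨q, hq, 0, by simp⟩

theorem mem_adjoinFilter_self {F : Set α} (hF : IsFilter F) (z : α) : z ∈ adjoinFilter F z :=
  ⟨1, hF.one_mem, 1, by simp⟩

/-- The step that makes a filter maximal away from a `∨`-closed set prime: by `sup_pow_le`,
`(a ∨ q)(a ∨ w)ⁿ ≤ a ∨ q wⁿ`. -/
theorem IsFilter.sup_mem_of_adjoinFilter {Q : Set α} (hQ : IsFilter Q) {a w c : α}
    (haw : a ⊔ w ∈ Q) (hc : c ∈ adjoinFilter Q w) : a ⊔ c ∈ Q := by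
  obtain ⟨q, hq, n, hqc⟩ := hc
  have hmem : (a ⊔ q) * (a ⊔ w) ^ n ∈ Q :=
    hQ.mul_mem (hQ.mem_of_le hq le_sup_right) (hQ.pow_mem haw n)
  refine hQ.mem_of_le hmem ?_
  calc (a ⊔ q) * (a ⊔ w) ^ n ≤ (a ⊔ q) * (a ⊔ w ^ n) := mul_le_mul_right (sup_pow_le a w n) _
    _ ≤ a ⊔ q * w ^ n := sup_mul_sup_le_s9 a q (w ^ n)
    _ ≤ a ⊔ c := sup_le_sup_left hqc a

theorem isPrimeFilter_of_maximal_disjoint {C : Set α} (hC : IsJoinClosed C) {Q : Set α}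
    (hQ : Maximal (fun G => IsFilter G ∧ Disjoint G C) Q) : IsPrimeFilter Q := by
  obtain ⟨⟨hQf, hQC⟩, hmax⟩ := hQ
  have meets : ∀ z ∉ Q, ∃ c ∈ C, c ∈ adjoinFilter Q z := by
    intro z hz
    by_contra! hdisj
    exact hz (hmax ⟨isFilter_adjoinFilter hQf z, Set.disjoint_right.2 hdisj⟩
      (subset_adjoinFilter Q z) (mem_adjoinFilter_self hQf z))
  refine ⟨hQf, fun hQu => ?_, fun x y hxy => ?_⟩
  · obtain ⟨c, hc⟩ := hC.1
    exact Set.disjoint_right.1 hQC hc (hQu ▸ Set.mem_univ c)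
  · by_contra! hxy'
    obtain ⟨c₁, hc₁C, hc₁⟩ := meets x hxy'.1
    obtain ⟨c₂, hc₂C, hc₂⟩ := meets y hxy'.2
    have hyc₁ : y ⊔ c₁ ∈ Q := hQf.sup_mem_of_adjoinFilter (sup_comm x y ▸ hxy) hc₁
    have hc₁c₂ : c₁ ⊔ c₂ ∈ Q := hQf.sup_mem_of_adjoinFilter (sup_comm y c₁ ▸ hyc₁) hc₂
    exact Set.disjoint_left.1 hQC hc₁c₂ (hC.2 c₁ hc₁C c₂ hc₂C)

theorem IsFilter.exists_isPrimeFilter_disjoint {F C : Set α} (hF : IsFilter F)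
    (hC : IsJoinClosed C) (hFC : Disjoint F C) :
    ∃ Q, IsPrimeFilter Q ∧ F ⊆ Q ∧ Disjoint Q C := by
  obtain ⟨Q, hFQ, hQ⟩ := zorn_subset_nonempty {G | IsFilter G ∧ Disjoint G C}
    (fun c hcS hchain hne => ⟨⋃₀ c,
      ⟨IsFilter.sUnion_of_isChain (fun G hG => (hcS hG).1) hchain hne,
        Set.disjoint_sUnion_left.2 fun G hG => (hcS hG).2⟩,
      fun _ => Set.subset_sUnion_of_mem⟩) F ⟨hF, hFC⟩
  exact ⟨Q, isPrimeFilter_of_maximal_disjoint hC hQ, hFQ, hQ.1.2⟩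

theorem IsPrimeFilter.bot_notMem {P : Set α} (hP : IsPrimeFilter P) : (⊥ : α) ∉ P :=
  fun h => hP.2.1 (Set.eq_univ_of_forall fun _ => hP.1.mem_of_le h bot_le)

theorem IsJoinClosed.image_sup_right {C : Set α} (hC : IsJoinClosed C) (a : α) :
    IsJoinClosed ((· ⊔ a) '' C) := by
  refine ⟨hC.1.image _, ?_⟩
  rintro _ ⟨x, hx, rfl⟩ _ ⟨y, hy, rfl⟩
  exact ⟨x ⊔ y, hC.2 x hx y hy, by rw [sup_sup_sup_comm, sup_idem]⟩

theorem mem_divisorsF_iff {F H : Set α} {a : α} : a ∈ divisorsF F H ↔ ¬coann F a ⊆ H := by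
  simp only [divisorsF, coann, Set.not_subset, sup_comm a, Set.mem_ofPred_eq]
  exact ⟨fun ⟨x, hx, h⟩ => ⟨x, h, hx⟩, fun ⟨x, h, hx⟩ => ⟨x, hx, h⟩⟩

theorem divisorsF_subset_of_subset {F P Q : Set α} (hQ : IsPrimeFilter Q) (hFQ : F ⊆ Q)
    (hQP : Q ⊆ P) : divisorsF F P ⊆ Q := by
  rintro a ⟨x, hx, hxa⟩
  exact (hQ.2.2 x a (hFQ hxa)).resolve_left fun h => hx (hQP h)

theorem isMinPrimeOver_of_subset_divisorsF {F P : Set α} (hP : IsPrimeFilter P) (hFP : F ⊆ P)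
    (hPD : P ⊆ divisorsF F P) : IsMinPrimeOver F P :=
  ⟨hP, hFP, fun _ hQ hFQ hQP => hQP.antisymm (hPD.trans (divisorsF_subset_of_subset hQ hFQ hQP))⟩

theorem IsMinPrimeOver.subset_divisorsF {F P : Set α} (hF : IsFilter F)
    (hP : IsMinPrimeOver F P) : P ⊆ divisorsF F P := by
  obtain ⟨hPp, hFP, hmin⟩ := hP
  intro a ha
  by_contra haD
  have hFC : Disjoint F ((· ⊔ a) '' Pᶜ) := by
    rw [Set.disjoint_left]
    rintro _ hxaF ⟨x, hx, rfl⟩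
    exact haD ⟨x, hx, hxaF⟩
  obtain ⟨Q, hQ, hFQ, hQC⟩ :=
    hF.exists_isPrimeFilter_disjoint (hPp.isJoinClosed_compl.image_sup_right a) hFC
  have hQP : Q ⊆ P := fun q hq => by
    by_contra hqP
    exact Set.disjoint_left.1 hQC (hQ.1.mem_of_le hq le_sup_left) ⟨q, hqP, rfl⟩
  have haQ : a ∉ Q := fun haQ =>
    Set.disjoint_left.1 hQC (hQ.1.mem_of_le haQ le_sup_right) ⟨⊥, hPp.bot_notMem, rfl⟩
  exact haQ (hmin Q hQ hFQ hQP ▸ ha)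

/-- Theorem 3.14: for a prime filter `P ⊇ F`, the following are equivalent:
`P` is an `F`-minimal prime filter; `P = D_F(P)`; for every `x`, `P` contains exactly one
of `x` and `(F : x)`. -/
theorem stmt_9 (F P : Set α) (hF : IsFilter F) (hP : IsPrimeFilter P) (hFP : F ⊆ P) :
    (IsMinPrimeOver F P ↔ P = divisorsF F P) ∧
    (IsMinPrimeOver F P ↔ ∀ x : α, Xor' (x ∈ P) (coann F x ⊆ P)) := by
  have hmin_iff : IsMinPrimeOver F P ↔ P = divisorsF F P :=
    ⟨fun h => (h.subset_divisorsF hF).antisymm (divisorsF_subset_of_subset hP hFP le_rfl),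
      fun h => isMinPrimeOver_of_subset_divisorsF hP hFP h.le⟩
  refine ⟨hmin_iff, hmin_iff.trans ?_⟩
  simp only [Set.ext_iff, mem_divisorsF_iff]
  exact forall_congr' fun x => xor_iff_iff_not.symm
end
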